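/- arXiv:1803.04914 — 8 statements merged into one kernel-verified Lean document; each statement's English description precedes it below -/
import Mathlib

section
/- For all integers n ≥ 0, m ≥ 0 with m ≤ N, and real x, the sum ∑_{k=0}^{N} (x+k)^n equals ∑_{m=0}^{min(n,N)} C(N+1, m+1) Δ^m I_n(x), where Δ^m I_n(x) = ∑_{k=0}^{m} C(m,k) (-1)^{m-k} (x+k)^n is the m-th forward difference of the monomial x^n. -/
open Finset

lemma fwdDiff_pow (n : ℕ) :
    fwdDiff (1:ℝ) (fun t : ℝ => t ^ n) =
      fun t => ∑ j ∈ range n, (n.choose j : ℝ) * t ^ j := by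
  funext t
  simp only [fwdDiff]
  rw [add_pow, sum_range_succ]
  simp [mul_comm]

lemma fwdDiff_iter_pow_eq_zero : ∀ n m : ℕ, n < m →
    (fwdDiff (1:ℝ))^[m] (fun t : ℝ => t ^ n) = fun _ => 0 := by
  intro n
  induction n using Nat.strong_induction_on with
  | _ n IH =>
    intro m hm
    obtain ⟨m, rfl⟩ : ∃ m', m = m' + 1 := ⟨m - 1, by omega⟩
    rw [Function.iterate_succ_apply, fwdDiff_pow]
    have : (fun t : ℝ => ∑ j ∈ range n, (n.choose j : ℝ) * t ^ j)
        = ∑ j ∈ range n, (fun t : ℝ => (n.choose j : ℝ) • t ^ j) := by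
      funext t; simp [smul_eq_mul]
    rw [this, fwdDiff_iter_finset_sum]
    refine funext fun y => ?_
    simp only [Finset.sum_apply, Pi.zero_apply]
    refine Finset.sum_eq_zero fun j hj => ?_
    have hj' := mem_range.mp hj
    have : (fun t : ℝ => (n.choose j : ℝ) • t ^ j) = (n.choose j : ℝ) • (fun t : ℝ => t ^ j) := by
      funext t; simp
    rw [this, fwdDiff_iter_const_smul, IH j hj' m (by omega)]
    simp

lemma sum_range_choose_hockey (N m : ℕ) :
    ∑ k ∈ range (N + 1), k.choose m = (N + 1).choose (m + 1) := by
  rw [← Nat.sum_Icc_choose]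
  refine (Finset.sum_subset (fun k hk => ?_) (fun k hk hnk => Nat.choose_eq_zero_of_lt ?_)).symm
  · simp only [mem_Icc] at hk; simp only [mem_range]; omega
  · simp only [mem_range] at hk; simp only [mem_Icc] at hnk; omega

/-- The classical sum of powers formula: for nonnegative integers `n, N` and real `x`,
`∑_{k=0}^{N} (x+k)^n = ∑_{m=0}^{min(n,N)} C(N+1, m+1) Δ^m I_n(x)`, where
`Δ^m I_n(x) = ∑_{k=0}^{m} C(m,k) (-1)^{m-k} (x+k)^n`. -/
theorem sum_powers_forward_diff (n N : ℕ) (x : ℝ) :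
    ∑ k ∈ range (N + 1), (x + k) ^ n =
      ∑ m ∈ range (min n N + 1), ((N + 1).choose (m + 1) : ℝ) *
        (∑ k ∈ range (m + 1), (m.choose k : ℝ) * (-1) ^ (m - k) * (x + k) ^ n) := by
  have hDval : ∀ m : ℕ, (fwdDiff (1:ℝ))^[m] (fun t : ℝ => t ^ n) x
      = ∑ k ∈ range (m + 1), (m.choose k : ℝ) * (-1) ^ (m - k) * (x + k) ^ n := by
    intro m
    rw [fwdDiff_iter_eq_sum_shift]
    refine Finset.sum_congr rfl fun k _ => ?_
    push_cast [zsmul_eq_mul]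
    ring_nf
  -- Newton expansion of each summand
  have hL : ∀ k ∈ range (N + 1), (x + (k:ℝ)) ^ n
      = ∑ m ∈ range (N + 1), (k.choose m : ℝ) *
          (fwdDiff (1:ℝ))^[m] (fun t : ℝ => t ^ n) x := by
    intro k hk
    have hk' := mem_range.mp hk
    have h1 := shift_eq_sum_fwdDiff_iter (1:ℝ) (fun t : ℝ => t ^ n) k x
    simp only [nsmul_eq_mul, mul_one, smul_eq_mul] at h1
    rw [h1]
    refine Finset.sum_subset (fun m hm => ?_) (fun m hm hnm => ?_)
    · simp only [mem_range] at hm ⊢; omega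
    · simp only [mem_range, not_lt] at hm hnm
      rw [Nat.choose_eq_zero_of_lt (by omega)]
      simp
  rw [Finset.sum_congr rfl hL, Finset.sum_comm]
  -- collapse inner sum
  have h2 : ∀ m : ℕ, ∑ k ∈ range (N + 1), (k.choose m : ℝ) *
      (fwdDiff (1:ℝ))^[m] (fun t : ℝ => t ^ n) x
      = ((N + 1).choose (m + 1) : ℝ) * (fwdDiff (1:ℝ))^[m] (fun t : ℝ => t ^ n) x := by
    intro m
    rw [← Finset.sum_mul, ← Nat.cast_sum, sum_range_choose_hockey]
  rw [Finset.sum_congr rfl fun m _ => h2 m]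
  -- truncate the range to min n N + 1
  rw [(Finset.sum_subset (fun m hm => ?_) (fun m hm hnm => ?_)).symm]
  · exact Finset.sum_congr rfl fun m _ => by rw [hDval]
  · simp only [mem_range] at hm ⊢; omega
  · simp only [mem_range, not_lt] at hm hnm
    rw [fwdDiff_iter_pow_eq_zero n m (by omega)]
    simp
end

section
/- Let p be a real polynomial of exact degree n, N ≥ 0 an integer, and x real. Then ∑_{k=0}^{N} p(x+k) = ∑_{k=0}^{min(n,N)} c_{n,N}(k) p(x+k), where c_{n,N}(k) = ∑_{m=k}^{min(n,N)} C(N+1, m+1) C(m, k) (-1)^{m-k}. -/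
open Finset Polynomial

private lemma fwdDiff_eval (p : Polynomial ℝ) :
    fwdDiff (1:ℝ) (fun y => p.eval y) = fun y => (p.comp (X + C 1) - p).eval y := by
  funext y
  simp [fwdDiff, Polynomial.eval_comp]

private lemma vanish : ∀ (m : ℕ) (p : Polynomial ℝ), p.degree < m →
    (fwdDiff (1:ℝ))^[m] (fun y => p.eval y) = 0 := by
  intro m
  induction m with
  | zero =>
    intro p hp
    have h0 : p = 0 := by
      rw [Nat.cast_zero] at hp
      exact Polynomial.degree_eq_bot.mp (Nat.WithBot.lt_zero_iff.mp hp)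
    subst h0
    funext y; simp
  | succ m IH =>
    intro p hp
    rw [Function.iterate_succ_apply, fwdDiff_eval]
    apply IH
    rcases eq_or_ne p 0 with rfl | hp0
    · simpa using (by exact_mod_cast WithBot.bot_lt_coe m : (⊥ : WithBot ℕ) < (m:ℕ))
    · have h1 : (X + C (1:ℝ)).natDegree = 1 := Polynomial.natDegree_X_add_C 1
      have hlc : (p.comp (X + C 1)).leadingCoeff = p.leadingCoeff := by
        rw [Polynomial.leadingCoeff_comp (by rw [h1]; exact one_ne_zero),
          Polynomial.leadingCoeff_X_add_C, one_pow, mul_one]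
      have hcomp0 : p.comp (X + C 1) ≠ 0 := by
        intro h
        exact hp0 (Polynomial.leadingCoeff_eq_zero.mp (by rw [← hlc, h, Polynomial.leadingCoeff_zero]))
      have hdcomp : (p.comp (X + C 1)).degree = p.degree := by
        rw [Polynomial.degree_eq_natDegree hcomp0, Polynomial.degree_eq_natDegree hp0,
          Polynomial.natDegree_comp, h1, mul_one]
      have hsub : (p.comp (X + C 1) - p).degree < p.degree := by
        have := Polynomial.degree_sub_lt hdcomp hcomp0 hlc
        rwa [hdcomp] at this
      have hple : p.degree ≤ (m : ℕ) := by
        have hn : p.natDegree < m + 1 := by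
          rwa [Polynomial.degree_eq_natDegree hp0, Nat.cast_lt] at hp
        rw [Polynomial.degree_eq_natDegree hp0]
        exact_mod_cast Nat.lt_succ_iff.mp hn
      exact lt_of_lt_of_le hsub hple

/-- For a real polynomial `p` of exact degree `n`, any `N` and real `x`,
`∑_{k=0}^{N} p(x+k) = ∑_{k=0}^{min(n,N)} c_{n,N}(k) p(x+k)`, where
`c_{n,N}(k) = ∑_{m=k}^{min(n,N)} C(N+1,m+1) C(m,k) (-1)^{m-k}`. -/
theorem sum_poly_eq_weighted_sum (p : Polynomial ℝ) (n N : ℕ)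
    (hdeg : p.degree = n) (x : ℝ) :
    ∑ k ∈ range (N + 1), p.eval (x + k) =
      ∑ k ∈ range (min n N + 1),
        (∑ m ∈ Icc k (min n N), ((N + 1).choose (m + 1) : ℝ) * (m.choose k : ℝ) * (-1) ^ (m - k))
          * p.eval (x + k) := by
  set f : ℝ → ℝ := fun y => p.eval y with hf
  set M := min n N with hM
  set D : ℕ → ℝ := fun m => (fwdDiff (1:ℝ))^[m] f x with hD
  have hDzero : ∀ m, n < m → D m = 0 := by
    intro m hm
    have : (fwdDiff (1:ℝ))^[m] f = 0 := vanish m p (by rw [hdeg]; exact_mod_cast hm)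
    simp [hD, this]
  -- Step 1: Gregory-Newton
  have step1 : ∑ k ∈ range (N + 1), p.eval (x + k)
      = ∑ k ∈ range (N + 1), ∑ m ∈ range (k + 1), (k.choose m : ℝ) * D m := by
    refine Finset.sum_congr rfl fun k _ => ?_
    have := shift_eq_sum_fwdDiff_iter (1:ℝ) f k x
    simp only [nsmul_eq_mul, mul_one] at this
    rw [show p.eval (x + k) = f (x + k) from rfl, this]
  -- Step 2: swap and hockey stick
  have step2 : ∑ k ∈ range (N + 1), ∑ m ∈ range (k + 1), (k.choose m : ℝ) * D m
      = ∑ m ∈ range (N + 1), ((N + 1).choose (m + 1) : ℝ) * D m := by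
    rw [Finset.sum_comm' (t' := range (N + 1)) (s' := fun m => Icc m N)
      (fun k m => by simp only [mem_range, mem_Icc]; omega)]
    refine Finset.sum_congr rfl fun m _ => ?_
    rw [← Finset.sum_mul, ← Nat.cast_sum, Nat.sum_Icc_choose]
  -- Step 3: truncate to M
  have step3 : ∑ m ∈ range (N + 1), ((N + 1).choose (m + 1) : ℝ) * D m
      = ∑ m ∈ range (M + 1), ((N + 1).choose (m + 1) : ℝ) * D m := by
    refine (Finset.sum_subset (Finset.range_subset_range.mpr (by omega)) ?_).symm
    intro m hm hm'
    simp only [mem_range] at hm hm'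
    rw [hDzero m (by omega), mul_zero]
  -- Step 4: expand D m
  have step4 : ∑ m ∈ range (M + 1), ((N + 1).choose (m + 1) : ℝ) * D m
      = ∑ m ∈ range (M + 1), ∑ k ∈ range (m + 1),
          ((N + 1).choose (m + 1) : ℝ) * ((m.choose k : ℝ) * (-1) ^ (m - k)) * p.eval (x + k) := by
    refine Finset.sum_congr rfl fun m _ => ?_
    have := fwdDiff_iter_eq_sum_shift (1:ℝ) f m x
    simp only [hD]
    simp only [nsmul_eq_mul, mul_one] at this
    rw [this, Finset.mul_sum]
    refine Finset.sum_congr rfl fun k _ => ?_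
    rw [zsmul_eq_mul]
    push_cast
    ring
  rw [step1, step2, step3, step4]
  rw [Finset.sum_comm' (t' := range (M + 1)) (s' := fun k => Icc k M)
    (fun m k => by simp only [mem_range, mem_Icc]; omega)]
  refine Finset.sum_congr rfl fun k _ => ?_
  rw [Finset.sum_mul]
  refine Finset.sum_congr rfl fun m _ => ?_
  ring
end

section
/- If N > n, then for each k = 0, 1, ..., n, c_{n,N}(k) = 1 + (-1)^{n-k} ∑_{i=0}^{N-(n+1)} C(n+1+i, k) C(n-k+i, n-k), where c_{n,N}(k) = ∑_{m=k}^{n} C(N+1, m+1) C(m, k) (-1)^{m-k}. -/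
/-!
Pascal's rule `C(N+2, m+1) = C(N+1, m) + C(N+1, m+1)` gives
`c_{n,N+1}(k) = c_{n,N}(k) + ∑_{m=k}^{n} C(N+1, m) C(m, k) (-1)^{m-k}`, and since
`C(N+1, m) C(m, k) = C(N+1, k) C(N+1-k, m-k)` the added sum is a partial alternating sum of a row
of Pascal's triangle, namely `(-1)^{n-k} C(N+1, k) C(N-k, n-k)`. This is the term `i = N - n` of
the sum in the theorem, so induction on `N` reduces everything to `c_{N,N}(k) = 1`, which follows
from the same recursion.
-/

open Finset

def cCoeff (n N k : ℕ) : ℤ :=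
  ∑ m ∈ Icc k n, ((N + 1).choose (m + 1) * m.choose k * (-1) ^ (m - k) : ℤ)

theorem sum_Icc_choose_mul_choose_mul_neg_one_pow {N k n : ℕ} (hkn : k ≤ n) (hkN : k ≤ N) :
    ∑ m ∈ Icc k n, ((N + 1).choose m * m.choose k * (-1) ^ (m - k) : ℤ)
      = (-1) ^ (n - k) * (N + 1).choose k * (N - k).choose (n - k) := by
  have hrow : ∀ j, ((N + 1).choose (k + j) * (k + j).choose k : ℤ)
      = (N + 1).choose k * (N - k + 1).choose j := by
    intro j
    have h := Nat.choose_mul (n := N + 1) (k := k + j) (Nat.le_add_right k j)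
    rw [Nat.add_sub_cancel_left, Nat.sub_add_comm hkN] at h
    exact_mod_cast h
  rw [← Ico_add_one_right_eq_Icc, sum_Ico_eq_sum_range, Nat.sub_add_comm hkn]
  simp only [hrow, Nat.add_sub_cancel_left]
  calc ∑ j ∈ range (n - k + 1), ((N + 1).choose k * (N - k + 1).choose j * (-1) ^ j : ℤ)
      = (N + 1).choose k *
          ∑ j ∈ range (n - k + 1), ((-1) ^ j * (N - k + 1).choose j : ℤ) := by
        rw [mul_sum]; exact sum_congr rfl fun j _ => by ring
    _ = _ := by rw [Int.alternating_sum_range_choose_eq_choose]; ring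

theorem cCoeff_succ {n N k : ℕ} (hkn : k ≤ n) (hkN : k ≤ N) :
    cCoeff n (N + 1) k
      = cCoeff n N k + (-1) ^ (n - k) * (N + 1).choose k * (N - k).choose (n - k) := by
  rw [← sum_Icc_choose_mul_choose_mul_neg_one_pow hkn hkN, cCoeff, cCoeff, ← sum_add_distrib]
  refine sum_congr rfl fun m _ => ?_
  rw [Nat.choose_succ_succ' (N + 1)]
  push_cast
  ring

theorem cCoeff_self {N k : ℕ} (hk : k ≤ N) : cCoeff N N k = 1 := by
  induction N, hk using Nat.le_induction with
  | base => simp [cCoeff]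
  | succ N hkN ih =>
    have hpeel : cCoeff (N + 1) (N + 1) k
        = cCoeff N (N + 1) k - (-1) ^ (N - k) * (N + 1).choose k := by
      rw [cCoeff, sum_Icc_succ_top (by omega), Nat.sub_add_comm hkN, ← cCoeff]
      simp only [Nat.choose_self]
      push_cast
      ring
    rw [hpeel, cCoeff_succ hkN hkN, ih, Nat.choose_self]
    push_cast
    ring

theorem cCoeff_eq {n N k : ℕ} (hN : n ≤ N) (hk : k ≤ n) :
    cCoeff n N k = 1 + (-1) ^ (n - k) *
      ∑ i ∈ range (N - n), ((n + 1 + i).choose k * (n - k + i).choose (n - k) : ℤ) := by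
  induction N, hN using Nat.le_induction with
  | base => simp [cCoeff_self hk]
  | succ N hnN ih =>
    rw [cCoeff_succ hk (hk.trans hnN), ih, Nat.sub_add_comm hnN, sum_range_succ,
      show n + 1 + (N - n) = N + 1 by omega, show n - k + (N - n) = N - k by omega]
    ring

/-- If `N > n` then for each `k ≤ n`,
`c_{n,N}(k) = 1 + (-1)^{n-k} ∑_{i=0}^{N-(n+1)} C(n+1+i, k) C(n-k+i, n-k)`, where
`c_{n,N}(k) = ∑_{m=k}^{n} C(N+1,m+1) C(m,k) (-1)^{m-k}`. -/
theorem c_coeff_alternating (n N k : ℕ) (hN : n < N) (hk : k ≤ n) :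
    ∑ m ∈ Icc k n, ((N + 1).choose (m + 1) : ℝ) * (m.choose k : ℝ) * (-1) ^ (m - k)
      = 1 + (-1 : ℝ) ^ (n - k) *
        ∑ i ∈ range (N - n), ((n + 1 + i).choose k : ℝ) * ((n - k + i).choose (n - k) : ℝ) := by
  have h := cCoeff_eq hN.le hk
  rw [cCoeff] at h
  exact_mod_cast h
end

section
/- The Stirling numbers of the second kind admit the probabilistic representation S(n,m) = C(n,m) · E[(U_1 + ... + U_m)^{n-m}], where U_1, ..., U_m are independent random variables uniformly distributed on [0,1] and 0 ≤ m ≤ n. -/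
open Finset MeasureTheory

/-!
By induction on `m`, Fubini in the last coordinate and the fundamental theorem of calculus show
that integrating `f⁽ᵐ⁾(t + u₁ + ⋯ + uₘ)` over the unit cube gives the forward difference
`Δᵐ f(t) = ∑ₖ (-1)ᵐ⁻ᵏ C(m,k) f(t + k)`. For `f(x) = xⁿ` and `t = 0` the left side is
`n(n-1)⋯(n-m+1) · E[(U₁ + ⋯ + Uₘ)ⁿ⁻ᵐ] = m! C(n,m) · E[…]` and the right side is `m! S(n,m)`.
-/

/-- The Stirling number of the second kind, defined by
`S(n,m) = (1/m!) ∑_{k=0}^{m} C(m,k) (-1)^{m-k} k^n`. -/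
noncomputable def stirling2 (n m : ℕ) : ℝ :=
  ((m.factorial : ℝ))⁻¹ * ∑ k ∈ range (m + 1), (m.choose k : ℝ) * (-1) ^ (m - k) * (k : ℝ) ^ n

open Set fwdDiff

variable {E : Type*} [NormedAddCommGroup E] [NormedSpace ℝ E]

theorem setIntegral_Icc_pi_succAbove {m : ℕ} {g : (Fin (m + 1) → ℝ) → E}
    {a b : Fin (m + 1) → ℝ} (hg : IntegrableOn g (Icc a b)) (i : Fin (m + 1)) :
    ∫ u in Icc a b, g u =
      ∫ y in Icc (a ∘ i.succAbove) (b ∘ i.succAbove), ∫ x in Icc (a i) (b i),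
        g (i.insertNth x y) := by
  set e : ℝ × (Fin m → ℝ) ≃ᵐ (Fin (m + 1) → ℝ) :=
    (MeasurableEquiv.piFinSuccAbove (fun _ => ℝ) i).symm
  have he : MeasurePreserving e :=
    (volume_preserving_piFinSuccAbove (fun _ : Fin (m + 1) => ℝ) i).symm _
  have hIcc : e ⁻¹' Icc a b = Icc (a i) (b i) ×ˢ Icc (a ∘ i.succAbove) (b ∘ i.succAbove) :=
    ((Fin.insertNthOrderIso (fun _ => ℝ) i).preimage_Icc _ _).trans (Icc_prod_eq _ _)
  have hg' : IntegrableOn (g ∘ e) (Icc (a i) (b i) ×ˢ Icc (a ∘ i.succAbove) (b ∘ i.succAbove))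
      (volume.prod volume) := by
    rwa [← Measure.volume_eq_prod, ← hIcc, he.integrableOn_comp_preimage e.measurableEmbedding]
  rw [← he.map_eq, setIntegral_map_equiv, hIcc, Measure.volume_eq_prod, ← setIntegral_prod_swap,
    setIntegral_prod (fun z => g (e z.swap)) hg'.swap]
  rfl

theorem integral_Icc_zero_one_deriv_add [CompleteSpace E] {g : ℝ → E} (hg : Differentiable ℝ g)
    (hg' : Continuous (deriv g)) (s : ℝ) :
    ∫ x in Icc (0 : ℝ) 1, deriv g (s + x) = g (s + 1) - g s := by
  rw [integral_Icc_eq_integral_Ioc, ← intervalIntegral.integral_of_le zero_le_one,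
    intervalIntegral.integral_comp_add_left (deriv g),
    intervalIntegral.integral_deriv_eq_sub (fun x _ => hg x) (hg'.intervalIntegrable _ _), add_zero]

theorem integral_Icc_iteratedDeriv_sum_eq_fwdDiff_iter [CompleteSpace E] {f : ℝ → E} (m : ℕ)
    (hf : ContDiff ℝ m f) (t : ℝ) :
    ∫ u in Icc (0 : Fin m → ℝ) 1, iteratedDeriv m f (t + ∑ i, u i) = (Δ_[1])^[m] f t := by
  induction m generalizing t with
  | zero =>
    rw [(Set.nonempty_Icc.2 (zero_le_one (α := Fin 0 → ℝ))).eq_univ]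
    simp [measureReal_def, volume_pi]
  | succ m ih =>
    have hcont : ∀ k ≤ m + 1, ∀ s : ℝ, Continuous fun u : Fin k → ℝ =>
        iteratedDeriv k f (s + ∑ i, u i) := fun k hk s =>
      (hf.continuous_iteratedDeriv k (by exact_mod_cast hk)).comp (by fun_prop)
    rw [setIntegral_Icc_pi_succAbove (hcont (m + 1) le_rfl t).integrableOn_Icc (Fin.last m)]
    simp only [Fin.sum_univ_succAbove _ (Fin.last m), Fin.insertNth_apply_same,
      Fin.insertNth_apply_succAbove, Pi.zero_comp, Pi.one_comp, Pi.zero_apply, Pi.one_apply,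
      iteratedDeriv_succ]
    have hderiv : Continuous (deriv (iteratedDeriv m f)) := by
      rw [← iteratedDeriv_succ]
      exact hf.continuous_iteratedDeriv' (m + 1)
    calc _ = ∫ y in Icc (0 : Fin m → ℝ) 1,
          (iteratedDeriv m f (t + 1 + ∑ i, y i) - iteratedDeriv m f (t + ∑ i, y i)) := by
          refine setIntegral_congr_fun measurableSet_Icc fun y _ => ?_
          rw [add_right_comm, ← integral_Icc_zero_one_deriv_add (hf.differentiable_iteratedDeriv' m)
            hderiv]
          congr 1 with x
          rw [add_comm x, add_assoc]
      _ = Δ_[1] ((Δ_[1])^[m] f) t := by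
          rw [integral_sub (hcont m m.le_succ _).integrableOn_Icc
            (hcont m m.le_succ _).integrableOn_Icc, ih (hf.of_le (by exact_mod_cast m.le_succ)),
            ih (hf.of_le (by exact_mod_cast m.le_succ))]
          rfl
      _ = (Δ_[1])^[m + 1] f t := by rw [Function.iterate_succ_apply']

theorem stirling2_eq_inv_factorial_mul_fwdDiff_iter_pow (n m : ℕ) :
    stirling2 n m = (m.factorial : ℝ)⁻¹ * (Δ_[1])^[m] (fun x : ℝ => x ^ n) 0 := by
  rw [stirling2, fwdDiff_iter_eq_sum_shift]
  congr 1
  refine sum_congr rfl fun k _ => ?_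
  simp only [zsmul_eq_mul, nsmul_eq_mul, mul_one, zero_add]
  push_cast
  ring

theorem stirling2_eq_choose_mul_integral_general (n m : ℕ) :
    stirling2 n m = (n.choose m : ℝ) *
      ∫ u in Set.Icc (0 : Fin m → ℝ) 1, (∑ i, u i) ^ (n - m) := by
  have hcube := integral_Icc_iteratedDeriv_sum_eq_fwdDiff_iter (f := fun x : ℝ => x ^ n) m
    (contDiff_id.pow n) 0
  simp only [iteratedDeriv_pow, zero_add, integral_const_mul] at hcube
  rw [stirling2_eq_inv_factorial_mul_fwdDiff_iter_pow, ← hcube,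
    Nat.descFactorial_eq_factorial_mul_choose]
  push_cast
  field_simp

/-- Probabilistic representation of Stirling numbers of the second kind:
`S(n,m) = C(n,m) · E[(U_1 + ⋯ + U_m)^{n-m}]`, where `U_1, …, U_m` are i.i.d. uniform on
`[0,1]` and the expectation is the integral over the unit cube. -/
theorem stirling2_eq_choose_mul_integral (n m : ℕ) (h : m ≤ n) :
    stirling2 n m = (n.choose m : ℝ) *
      ∫ u in Set.Icc (0 : Fin m → ℝ) 1, (∑ i, u i) ^ (n - m) :=
  stirling2_eq_choose_mul_integral_general n m
end

section
/- If f : ℝ → ℝ is m times continuously differentiable, then for any real y_1, ..., y_m and x, the iterated difference Δ_{y_1,...,y_m} f(x) equals y_1 ⋯ y_m times the integral over the unit cube [0,1]^m of f^{(m)}(x + y_1 u_1 + ... + y_m u_m) du_1 ⋯ du_m. -/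
/-!
Induction on `m`. Writing `g = f^{(m)}` and `s = y₂u₂ + ⋯ + y_{m+1}u_{m+1}`, the induction
hypothesis turns `Δ_{y₁,…,y_{m+1}} f(x)` into `y₂⋯y_{m+1}` times the integral over `[0,1]^m` of
`g(x + y₁ + s) - g(x + s)`; the fundamental theorem of calculus along `t ↦ x + s + y₁t` rewrites
this difference as `y₁ ∫₀¹ g'(x + y₁t + s) dt`, and Fubini merges the two integrals into one over
`[0,1]^{m+1}`.
-/

open Finset MeasureTheory

/-- The difference operator `Δ_y f(x) = f(x+y) - f(x)`. -/
def diffOp (y : ℝ) (f : ℝ → ℝ) : ℝ → ℝ := fun x => f (x + y) - f x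

/-- The iterated difference operator `Δ_{y_1} ∘ ⋯ ∘ Δ_{y_m}`. -/
def iterDiff : (m : ℕ) → (Fin m → ℝ) → (ℝ → ℝ) → (ℝ → ℝ)
  | 0, _, f => f
  | m + 1, y, f => diffOp (y 0) (iterDiff m (fun i => y i.succ) f)


theorem sub_eq_smul_setIntegral_deriv {E : Type*} [NormedAddCommGroup E] [NormedSpace ℝ E]
    [CompleteSpace E] {g : ℝ → E} (hg : ContDiff ℝ 1 g) (b c : ℝ) :
    g (b + c) - g b = c • ∫ t in Set.Icc (0 : ℝ) 1, deriv g (b + c * t) := by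
  have hg' : Continuous (deriv g) := hg.continuous_deriv le_rfl
  have hderiv : ∀ t, HasDerivAt (fun t => g (b + c * t)) (c • deriv g (b + c * t)) t := fun t =>
    ((hg.differentiable one_ne_zero).differentiableAt.hasDerivAt).scomp t
      (((hasDerivAt_id t).const_mul c).const_add b |>.congr_deriv (mul_one c))
  rw [← integral_smul, integral_Icc_eq_integral_Ioc, ← intervalIntegral.integral_of_le zero_le_one,
    intervalIntegral.integral_eq_sub_of_hasDerivAt (fun t _ => hderiv t)
      ((by fun_prop : Continuous fun t => c • deriv g (b + c * t)).intervalIntegrable _ _)]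
  simp

theorem setIntegral_Icc_fin_succ {E : Type*} [NormedAddCommGroup E] [NormedSpace ℝ E] {n : ℕ}
    {F : (Fin (n + 1) → ℝ) → E} {a b : Fin (n + 1) → ℝ} (hF : IntegrableOn F (Set.Icc a b)) :
    ∫ u in Set.Icc a b, F u =
      ∫ v in Set.Icc (Fin.tail a) (Fin.tail b), ∫ t in Set.Icc (a 0) (b 0), F (Fin.cons t v) := by
  set e : (Fin n → ℝ) × ℝ ≃ᵐ (Fin (n + 1) → ℝ) :=
    MeasurableEquiv.prodComm.trans (MeasurableEquiv.piFinSuccAbove (fun _ => ℝ) 0).symm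
  have he : MeasurePreserving e :=
    Measure.measurePreserving_swap.trans
      (volume_preserving_piFinSuccAbove (fun _ : Fin (n + 1) => ℝ) 0).symm
  have he_apply (v : Fin n → ℝ) (t : ℝ) : e (v, t) = Fin.cons t v := by
    simp only [e, MeasurableEquiv.trans_apply, MeasurableEquiv.piFinSuccAbove_symm_apply,
      Fin.insertNthEquiv_zero]
    rfl
  have hpre : e ⁻¹' Set.Icc a b = Set.Icc (Fin.tail a) (Fin.tail b) ×ˢ Set.Icc (a 0) (b 0) := by
    ext ⟨v, t⟩
    simp only [Set.mem_preimage, he_apply, Set.mem_prod, Set.mem_Icc, Fin.le_cons, Fin.cons_le]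
    tauto
  rw [← he.setIntegral_preimage_emb e.measurableEmbedding, hpre, Measure.volume_eq_prod,
    setIntegral_prod]
  · simp only [he_apply]
  · rw [← Measure.volume_eq_prod, ← hpre]
    exact (he.integrableOn_comp_preimage e.measurableEmbedding).2 hF

theorem setIntegral_unitCube_sub_eq_smul_deriv {E : Type*} [NormedAddCommGroup E]
    [NormedSpace ℝ E] [CompleteSpace E] {g : ℝ → E} (hg : ContDiff ℝ 1 g) {m : ℕ}
    (y : Fin (m + 1) → ℝ) (x : ℝ) :
    ∫ v in Set.Icc (0 : Fin m → ℝ) 1,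
        (g (x + y 0 + ∑ i, y i.succ * v i) - g (x + ∑ i, y i.succ * v i)) =
      y 0 • ∫ u in Set.Icc (0 : Fin (m + 1) → ℝ) 1, deriv g (x + ∑ i, y i * u i) := by
  have hg' : Continuous (deriv g) := hg.continuous_deriv le_rfl
  rw [setIntegral_Icc_fin_succ (Continuous.integrableOn_Icc (by fun_prop)), ← integral_smul]
  refine setIntegral_congr_fun measurableSet_Icc fun v _ => ?_
  simp only [Fin.sum_univ_succ, Fin.cons_zero, Fin.cons_succ, Pi.zero_apply, Pi.one_apply]
  rw [add_right_comm, sub_eq_smul_setIntegral_deriv hg]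
  congr! 4 with t
  ring

/-- If `f` is `m` times continuously differentiable, then
`Δ_{y_1,…,y_m} f(x) = y_1 ⋯ y_m ∫_{[0,1]^m} f^{(m)}(x + y_1 u_1 + ⋯ + y_m u_m) du`. -/
theorem iterDiff_eq_integral (m : ℕ) (f : ℝ → ℝ) (hf : ContDiff ℝ m f)
    (y : Fin m → ℝ) (x : ℝ) :
    iterDiff m y f x = (∏ i, y i) *
      ∫ u in Set.Icc (0 : Fin m → ℝ) 1, iteratedDeriv m f (x + ∑ i, y i * u i) := by
  induction m generalizing x with
  | zero => simp [iterDiff, Measure.real, Real.volume_Icc_pi]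
  | succ m ih =>
    obtain ⟨hfm, hg⟩ := contDiff_nat_succ_iff_contDiff_one_iteratedDeriv.1 hf
    have hint (z : ℝ) : IntegrableOn
        (fun v : Fin m → ℝ => iteratedDeriv m f (z + ∑ i, y i.succ * v i)) (Set.Icc 0 1) :=
      (hg.continuous.comp (by fun_prop)).integrableOn_Icc
    calc iterDiff (m + 1) y f x
        = iterDiff m (fun i => y i.succ) f (x + y 0) - iterDiff m (fun i => y i.succ) f x := rfl
      _ = (∏ i : Fin m, y i.succ) * ∫ v in Set.Icc (0 : Fin m → ℝ) 1,
            (iteratedDeriv m f (x + y 0 + ∑ i, y i.succ * v i) -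
              iteratedDeriv m f (x + ∑ i, y i.succ * v i)) := by
        rw [ih hfm, ih hfm, ← mul_sub, integral_sub (hint _) (hint _)]
      _ = _ := by
        rw [setIntegral_unitCube_sub_eq_smul_deriv hg, iteratedDeriv_succ, Fin.prod_univ_succ,
          smul_eq_mul]
        ring
end

section
/- If Y has the exponential distribution with density e^{-θ} on (0,∞), then the associated generalized Stirling numbers satisfy S_Y(n,m) = C(n,m) ⟨m⟩_{n-m} for m ≤ n; equivalently, (1/m!) ∑_{k=0}^{m} C(m,k)(-1)^{m-k} ⟨k⟩_n = C(n,m) ⟨m⟩_{n-m}. -/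
open Finset

/-- The rising factorial `⟨x⟩_n = x (x+1) ⋯ (x+n-1)` of a real number. -/
def risingFactorial (x : ℝ) (n : ℕ) : ℝ := ∏ i ∈ range n, (x + i)

lemma risingFactorial_zero (x : ℝ) : risingFactorial x 0 = 1 := by
  simp [risingFactorial]

lemma risingFactorial_succ_left (x : ℝ) (n : ℕ) :
    risingFactorial x (n + 1) = x * risingFactorial (x + 1) n := by
  rw [risingFactorial, risingFactorial, Finset.prod_range_succ']
  rw [mul_comm]
  congr 1
  · push_cast; ring
  · apply Finset.prod_congr rfl
    intro i _
    push_cast; ring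

lemma risingFactorial_succ_right (x : ℝ) (n : ℕ) :
    risingFactorial x (n + 1) = risingFactorial x n * (x + n) := by
  rw [risingFactorial, risingFactorial, Finset.prod_range_succ]

lemma fwdDiff_risingFactorial (n : ℕ) :
    fwdDiff (1 : ℝ) (fun x => risingFactorial x (n + 1)) =
      fun x => (n + 1) * risingFactorial (x + 1) n := by
  funext x
  have h1 : risingFactorial (x + 1) (n + 1) = risingFactorial (x + 1) n * (x + 1 + n) :=
    risingFactorial_succ_right _ _
  have h2 : risingFactorial x (n + 1) = x * risingFactorial (x + 1) n :=
    risingFactorial_succ_left _ _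
  simp only [fwdDiff, h1, h2]
  ring

lemma fwdDiff_iter_shift (m : ℕ) (f : ℝ → ℝ) (a x : ℝ) :
    (fwdDiff (1 : ℝ))^[m] (fun y => f (y + a)) x = (fwdDiff (1 : ℝ))^[m] f (x + a) := by
  induction m generalizing f x with
  | zero => simp
  | succ m ih =>
      rw [Function.iterate_succ_apply, Function.iterate_succ_apply]
      have : fwdDiff (1 : ℝ) (fun y => f (y + a)) = fun y => (fwdDiff (1 : ℝ) f) (y + a) := by
        funext y
        simp only [fwdDiff]
        ring_nf
      rw [this, ih]

lemma fwdDiff_iter_risingFactorial (m n : ℕ) (x : ℝ) :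
    (fwdDiff (1 : ℝ))^[m] (fun y => risingFactorial y n) x =
      (n.descFactorial m : ℝ) * risingFactorial (x + m) (n - m) := by
  induction m generalizing n x with
  | zero => simp
  | succ m ih =>
      rw [Function.iterate_succ_apply]
      cases n with
      | zero =>
          have : fwdDiff (1 : ℝ) (fun y => risingFactorial y 0) = fun _ => 0 := by
            funext y; simp [fwdDiff, risingFactorial_zero]
          rw [this]
          simp only [Nat.zero_descFactorial_succ, Nat.cast_zero, zero_mul]
          have h0 : (fun _ : ℝ => (0:ℝ)) = (0:ℝ) • (fun y : ℝ => risingFactorial y 0) := by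
            funext y; simp
          rw [h0, fwdDiff_iter_const_smul]
          simp
      | succ n =>
          rw [fwdDiff_risingFactorial]
          have : (fun x : ℝ => ((n : ℝ) + 1) * risingFactorial (x + 1) n) =
              (n + 1 : ℝ) • (fun y : ℝ => risingFactorial (y + 1) n) := by
            funext y; simp
          rw [this, fwdDiff_iter_const_smul, Pi.smul_apply, smul_eq_mul,
            fwdDiff_iter_shift m (fun y => risingFactorial y n) 1 x, ih]
          have hd : ((n + 1).descFactorial (m + 1) : ℝ) =
              ((n : ℝ) + 1) * (n.descFactorial m : ℝ) := by
            rw [Nat.succ_descFactorial_succ]; push_cast; ring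
          have hx : x + 1 + (m : ℝ) = x + (m + 1 : ℕ) := by push_cast; ring
          rw [hd, hx]
          have : n - m = n + 1 - (m + 1) := by omega
          rw [this]
          ring

/-- For `Y` exponential with density `e^{-θ}`, `E[S_k^n] = ⟨k⟩_n`, and the associated
generalized Stirling numbers satisfy `S_Y(n,m) = C(n,m) ⟨m⟩_{n-m}`; equivalently,
`(1/m!) ∑_{k=0}^{m} C(m,k) (-1)^{m-k} ⟨k⟩_n = C(n,m) ⟨m⟩_{n-m}` for `m ≤ n`. -/
theorem generalized_stirling_exponential (n m : ℕ) (h : m ≤ n) :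
    ((m.factorial : ℝ))⁻¹ *
      ∑ k ∈ range (m + 1), (m.choose k : ℝ) * (-1) ^ (m - k) * risingFactorial (k : ℝ) n =
      (n.choose m : ℝ) * risingFactorial (m : ℝ) (n - m) := by
  have key := fwdDiff_iter_eq_sum_shift (1 : ℝ) (fun y => risingFactorial y n) m (0 : ℝ)
  rw [fwdDiff_iter_risingFactorial] at key
  have hsum : ∑ k ∈ range (m + 1), (m.choose k : ℝ) * (-1) ^ (m - k) * risingFactorial (k : ℝ) n
      = (n.descFactorial m : ℝ) * risingFactorial ((0:ℝ) + m) (n - m) := by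
    rw [key]
    apply Finset.sum_congr rfl
    intro k _
    rw [zsmul_eq_mul]
    have : (0:ℝ) + k • (1:ℝ) = (k:ℝ) := by simp
    rw [this]
    push_cast
    ring
  rw [hsum, Nat.descFactorial_eq_factorial_mul_choose]
  push_cast
  rw [zero_add]
  field_simp [Nat.factorial_ne_zero]
end

section
/- For N ≥ n, ∑_{k=0}^{N} ⟨k⟩_n = ∑_{m=0}^{n} C(N+1, m+1) (n)_m ⟨m⟩_{n-m}, where (n)_m = n(n-1)⋯(n-m+1) is the falling factorial and ⟨k⟩_n = k(k+1)⋯(k+n-1) is the rising factorial. -/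
open Finset

/-- The falling factorial `(x)_m = x (x-1) ⋯ (x-m+1)` of a real number. -/
def fallingFactorial (x : ℝ) (m : ℕ) : ℝ := ∏ i ∈ range m, (x - i)

lemma risingFactorial_natCast (k n : ℕ) :
    risingFactorial (k : ℝ) n = (k.ascFactorial n : ℝ) := by
  induction n with
  | zero => simp [risingFactorial]
  | succ n ih =>
      rw [risingFactorial, prod_range_succ, ← risingFactorial, ih, Nat.ascFactorial_succ]
      push_cast
      ring

lemma fallingFactorial_natCast (n m : ℕ) (h : m ≤ n) :
    fallingFactorial (n : ℝ) m = (n.descFactorial m : ℝ) := by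
  rw [fallingFactorial, Nat.descFactorial_eq_prod_range, Nat.cast_prod]
  refine prod_congr rfl fun i hi => ?_
  rw [mem_range] at hi
  rw [Nat.cast_sub (by omega)]

lemma key_nat (n N : ℕ) (h : n ≤ N) :
    ∑ k ∈ range (N + 1), k.ascFactorial n =
      ∑ m ∈ range (n + 1), (N + 1).choose (m + 1) * n.descFactorial m *
        m.ascFactorial (n - m) := by
  cases n with
  | zero => simp [Nat.choose_one_right]
  | succ s =>
      -- LHS
      have hL : ∑ k ∈ range (N + 1), k.ascFactorial (s + 1) =
          (s + 1).factorial * (N + s + 1).choose (s + 2) := by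
        rw [Finset.sum_range_succ']
        simp only [Nat.zero_ascFactorial, add_zero]
        have : ∀ j, (j + 1).ascFactorial (s + 1) = (s + 1).factorial * ((j + (s + 1)).choose (s + 1)) :=
          fun j => Nat.ascFactorial_eq_factorial_mul_choose j (s + 1)
        rw [Finset.sum_congr rfl fun j _ => this j, ← Finset.mul_sum]
        obtain ⟨M, rfl⟩ : ∃ M, N = M + 1 := ⟨N - 1, by omega⟩
        rw [Nat.sum_range_add_choose M (s + 1)]
        congr 2
        omega
      rw [hL]
      -- RHS
      rw [Finset.sum_range_succ']
      simp only [Nat.zero_ascFactorial, Nat.mul_zero, add_zero, Nat.sub_zero]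
      have hterm : ∀ j, j < s + 1 →
          (N + 1).choose (j + 1 + 1) * (s + 1).descFactorial (j + 1) *
            (j + 1).ascFactorial (s + 1 - (j + 1)) =
          (s + 1).factorial * ((N + 1).choose (j + 2) * s.choose (s - j)) := by
        intro j hj
        have hj' : j ≤ s := by omega
        have h1 : s + 1 - (j + 1) = s - j := by omega
        rw [h1, Nat.ascFactorial_eq_factorial_mul_choose j (s - j),
          Nat.descFactorial_eq_factorial_mul_choose]
        have h2 : j + (s - j) = s := by omega
        rw [h2]
        have h3 : (s + 1).choose (j + 1) * (j + 1).factorial * (s + 1 - (j + 1)).factorial = (s + 1).factorial :=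
          Nat.choose_mul_factorial_mul_factorial (by omega)
        rw [h1] at h3
        calc (N + 1).choose (j + 1 + 1) * ((j + 1).factorial * (s + 1).choose (j + 1)) *
              ((s - j).factorial * s.choose (s - j))
            = ((s + 1).choose (j + 1) * (j + 1).factorial * (s - j).factorial) *
              ((N + 1).choose (j + 2) * s.choose (s - j)) := by ring
          _ = (s + 1).factorial * ((N + 1).choose (j + 2) * s.choose (s - j)) := by rw [h3]
      rw [Finset.sum_congr rfl fun j hj => hterm j (mem_range.mp hj), ← Finset.mul_sum]
      congr 1
      -- Vandermonde
      have hv := Nat.add_choose_eq (N + 1) s (s + 2)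
      rw [Finset.Nat.sum_antidiagonal_eq_sum_range_succ_mk] at hv
      have : N + s + 1 = N + 1 + s := by omega
      rw [this, hv, Finset.sum_range_succ', Finset.sum_range_succ']
      simp only [Nat.choose_zero_right, one_mul]
      rw [Nat.choose_eq_zero_of_lt (by omega : s < s + 2 - 0),
        Nat.choose_eq_zero_of_lt (by omega : s < s + 2 - 1)]
      simp only [Nat.mul_zero, add_zero]
      refine Finset.sum_congr rfl fun j hj => ?_
      rw [mem_range] at hj
      congr 2
      omega

/-- For `N ≥ n`, `∑_{k=0}^{N} ⟨k⟩_n = ∑_{m=0}^{n} C(N+1, m+1) (n)_m ⟨m⟩_{n-m}`. -/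
theorem sum_risingFactorial (n N : ℕ) (h : n ≤ N) :
    ∑ k ∈ range (N + 1), risingFactorial (k : ℝ) n =
      ∑ m ∈ range (n + 1), ((N + 1).choose (m + 1) : ℝ) *
        fallingFactorial (n : ℝ) m * risingFactorial (m : ℝ) (n - m) := by
  have := key_nat n N h
  calc ∑ k ∈ range (N + 1), risingFactorial (k : ℝ) n
      = ((∑ k ∈ range (N + 1), k.ascFactorial n : ℕ) : ℝ) := by
        rw [Nat.cast_sum]
        exact Finset.sum_congr rfl fun k _ => risingFactorial_natCast k n
    _ = ((∑ m ∈ range (n + 1), (N + 1).choose (m + 1) * n.descFactorial m *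
          m.ascFactorial (n - m) : ℕ) : ℝ) := by rw [this]
    _ = _ := by
        rw [Nat.cast_sum]
        refine Finset.sum_congr rfl fun m hm => ?_
        rw [mem_range] at hm
        rw [fallingFactorial_natCast n m (by omega), risingFactorial_natCast]
        push_cast
        ring
end

section
/- Probabilistic representation of Stirling numbers of the first kind: if Y = U·T where U is uniform on [0,1] and T is exponential with density e^{-θ}, independent, and S_k is the sum of k independent copies of Y, then s(n,k) = (-1)^{n-k} C(n,k) E[S_k^{n-k}] for 0 ≤ k ≤ n, where s(n,k) are the (signed) Stirling numbers of the first kind. -/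
/-!
The moments of `Y = U·T` are `E[Y^p] = E[U^p] E[T^p] = p!/(p+1)`, so its moment generating
function is `W(x) = ∑ x^p/(p+1) = -log(1-x)/x`, and `E[S_k^m] = m! [x^m] W(x)^k`. On the other
hand `(-log(1-x))^k / k!` is the exponential generating function of the unsigned Stirling numbers
`c(n,k)`: both sides satisfy `(1-x) F_{k+1}' = F_k`, which on coefficients is the recurrence
`c(n+1,k+1) = n c(n,k+1) + c(n,k)`. Hence
`c(n,k) = C(n,k) (n-k)! [x^{n-k}] W^k = C(n,k) E[S_k^{n-k}]`, and `s(n,k) = (-1)^{n-k} c(n,k)`.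
-/

open Finset MeasureTheory

/-- The signed Stirling numbers of the first kind, defined by the recurrence
`s(n+1, k+1) = s(n, k) - n · s(n, k+1)` with `s(0,0) = 1`. -/
def stirling1 : ℕ → ℕ → ℤ
  | 0, 0 => 1
  | 0, _ + 1 => 0
  | _ + 1, 0 => 0
  | n + 1, k + 1 => stirling1 n k - n * stirling1 n (k + 1)

open PowerSeries Nat

-- The sign `(-1)^(n+k)` agrees with `(-1)^(n-k)` and avoids truncated subtraction.
theorem stirling1_eq_neg_one_pow_mul_stirlingFirst (n k : ℕ) :
    stirling1 n k = (-1) ^ (n + k) * stirlingFirst n k := by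
  induction n generalizing k with
  | zero => cases k <;> simp [stirling1]
  | succ n ih =>
    cases k with
    | zero => simp [stirling1]
    | succ k =>
      rw [stirling1, ih, ih, stirlingFirst_succ_succ]
      push_cast
      ring

noncomputable def negLogOneSubDivX : ℝ⟦X⟧ :=
  mk fun p => ((p : ℝ) + 1)⁻¹

theorem derivative_X_mul_negLogOneSubDivX :
    d⁄dX ℝ (X * negLogOneSubDivX) = invUnitsSub 1 := by
  ext n
  rw [coeff_derivative, coeff_succ_X_mul, negLogOneSubDivX, coeff_mk, coeff_invUnitsSub]
  field_simp
  simp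

theorem one_sub_X_mul_derivative_X_mul_negLogOneSubDivX_pow_succ (k : ℕ) :
    (1 - X) * d⁄dX ℝ ((X * negLogOneSubDivX) ^ (k + 1)) =
      ((k : ℝ⟦X⟧) + 1) * (X * negLogOneSubDivX) ^ k := by
  have h := invUnitsSub_mul_sub (1 : ℝˣ)
  rw [Units.val_one, map_one] at h
  rw [derivative_pow, derivative_X_mul_negLogOneSubDivX, Nat.add_sub_cancel]
  push_cast
  linear_combination ((k : ℝ⟦X⟧) + 1) * (X * negLogOneSubDivX) ^ k * h

theorem succ_mul_coeff_succ_X_mul_negLogOneSubDivX_pow_succ (n k : ℕ) :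
    ((n : ℝ) + 1) * coeff (n + 1) ((X * negLogOneSubDivX) ^ (k + 1)) =
      n * coeff n ((X * negLogOneSubDivX) ^ (k + 1)) +
        (k + 1) * coeff n ((X * negLogOneSubDivX) ^ k) := by
  have h := congrArg (coeff n) (one_sub_X_mul_derivative_X_mul_negLogOneSubDivX_pow_succ k)
  rw [show ((k : ℝ⟦X⟧) + 1) = C ((k : ℝ) + 1) by simp, coeff_C_mul, sub_mul, one_mul, map_sub,
    coeff_derivative] at h
  cases n with
  | zero => simpa [mul_comm] using h
  | succ n =>
    rw [coeff_succ_X_mul, coeff_derivative] at h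
    push_cast at h ⊢
    linear_combination h

theorem factorial_mul_coeff_X_mul_negLogOneSubDivX_pow (n k : ℕ) :
    (n ! : ℝ) * coeff n ((X * negLogOneSubDivX) ^ k) = k ! * stirlingFirst n k := by
  induction n generalizing k with
  | zero => cases k <;> simp
  | succ n ih =>
    cases k with
    | zero => simp [coeff_one]
    | succ k =>
      have hrec := succ_mul_coeff_succ_X_mul_negLogOneSubDivX_pow_succ n k
      have ih₁ := ih k
      have ih₂ := ih (k + 1)
      rw [factorial_succ] at ih₂
      rw [stirlingFirst_succ_succ, factorial_succ, factorial_succ]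
      push_cast at ih₁ ih₂ ⊢
      linear_combination (n ! : ℝ) * hrec + n * ih₂ + (k + 1) * ih₁

theorem PowerSeries.coeff_pow_eq_sum_piAntidiag {R : Type*} [CommSemiring R] (F : R⟦X⟧)
    (k n : ℕ) :
    coeff n (F ^ k) = ∑ f ∈ piAntidiag (univ : Finset (Fin k)) n, ∏ i, coeff (f i) F := by
  rw [← Fin.prod_const, coeff_prod]
  exact sum_equiv Finsupp.equivFunOnFinite (by simp) (by simp)

section PiProduct

variable {ι 𝕜 : Type*} [Fintype ι] [RCLike 𝕜] {E : ι → Type*} {mE : ∀ i, MeasurableSpace (E i)}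
  {μ : ∀ i, Measure (E i)} [∀ i, SigmaFinite (μ i)]

theorem setIntegral_univ_pi_prod (s : ∀ i, Set (E i)) (f : ∀ i, E i → 𝕜) :
    ∫ x in Set.univ.pi s, ∏ i, f i (x i) ∂Measure.pi μ = ∏ i, ∫ y in s i, f i y ∂μ i := by
  rw [Measure.restrict_pi_pi, integral_fintype_prod_eq_prod]

theorem integrableOn_univ_pi_prod {s : ∀ i, Set (E i)} {f : ∀ i, E i → 𝕜}
    (hf : ∀ i, IntegrableOn (f i) (s i) (μ i)) :
    IntegrableOn (fun x ↦ ∏ i, f i (x i)) (Set.univ.pi s) (Measure.pi μ) := by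
  rw [IntegrableOn, Measure.restrict_pi_pi]
  exact Integrable.fintype_prod_dep hf

end PiProduct

theorem integral_Ioi_pow_mul_exp_neg (p : ℕ) :
    ∫ x in Set.Ioi (0 : ℝ), x ^ p * Real.exp (-x) = p ! := by
  have := Real.integral_rpow_mul_exp_neg_mul_Ioi (a := p + 1) (r := 1) (by positivity) one_pos
  simpa [Real.Gamma_nat_eq_factorial, mul_comm] using this

theorem integrableOn_Ioi_pow_mul_exp_neg (p : ℕ) :
    IntegrableOn (fun x : ℝ ↦ x ^ p * Real.exp (-x)) (Set.Ioi 0) := by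
  refine (Real.GammaIntegral_convergent (s := p + 1) (by positivity)).congr_fun
    (fun x _ ↦ ?_) measurableSet_Ioi
  simp [mul_comm]

theorem integral_Icc_zero_one_pow (p : ℕ) :
    ∫ x in Set.Icc (0 : ℝ) 1, x ^ p = ((p : ℝ) + 1)⁻¹ := by
  rw [integral_Icc_eq_integral_Ioc, ← intervalIntegral.integral_of_le zero_le_one, integral_pow]
  simp

theorem integral_sum_mul_pow_mul_prod_exp_neg {ι : Type*} [Fintype ι] [DecidableEq ι]
    (u : ι → ℝ) (m : ℕ) :
    ∫ t in Set.univ.pi (fun _ : ι ↦ Set.Ioi (0 : ℝ)), (∑ i, u i * t i) ^ m * ∏ i, Real.exp (-t i)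
      = m ! * ∑ f ∈ piAntidiag univ m, ∏ i, u i ^ f i := by
  have hexpand (t : ι → ℝ) : (∑ i, u i * t i) ^ m * ∏ i, Real.exp (-t i) =
      ∑ f ∈ piAntidiag univ m,
        (multinomial univ f * ∏ i, u i ^ f i) * ∏ i, (t i ^ f i * Real.exp (-t i)) := by
    rw [sum_pow_eq_sum_piAntidiag, sum_mul]
    refine sum_congr rfl fun f _ ↦ ?_
    simp only [mul_pow, prod_mul_distrib]
    ring
  simp only [hexpand, volume_pi]
  rw [integral_finsetSum _ fun f _ ↦
    (integrableOn_univ_pi_prod fun i ↦ integrableOn_Ioi_pow_mul_exp_neg (f i)).const_mul _,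
    mul_sum]
  refine sum_congr rfl fun f hf ↦ ?_
  have hmultinomial : (multinomial univ f * ∏ i, ((f i)! : ℝ)) = m ! := by
    rw [← (mem_piAntidiag.mp hf).1]
    exact_mod_cast (mul_comm _ _).trans (multinomial_spec univ f)
  rw [integral_const_mul,
    setIntegral_univ_pi_prod (fun _ ↦ Set.Ioi 0) fun i x ↦ x ^ f i * Real.exp (-x)]
  simp only [integral_Ioi_pow_mul_exp_neg]
  rw [← hmultinomial]
  ring

theorem integral_integral_sum_mul_pow_mul_prod_exp_neg (k m : ℕ) :
    ∫ u in Set.Icc (0 : Fin k → ℝ) 1,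
        ∫ t in Set.univ.pi (fun _ : Fin k ↦ Set.Ioi (0 : ℝ)),
          (∑ i, u i * t i) ^ m * ∏ i, Real.exp (-t i)
      = m ! * coeff m (negLogOneSubDivX ^ k) := by
  simp only [integral_sum_mul_pow_mul_prod_exp_neg, coeff_pow_eq_sum_piAntidiag,
    negLogOneSubDivX, coeff_mk]
  rw [← Set.pi_univ_Icc, volume_pi, integral_const_mul, integral_finsetSum _ fun f _ ↦ by
    exact integrableOn_univ_pi_prod fun i ↦ (continuous_pow (f i)).integrableOn_Icc]
  refine congrArg _ (sum_congr rfl fun f _ ↦ ?_)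
  rw [setIntegral_univ_pi_prod _ fun i x ↦ x ^ f i]
  simp only [Pi.zero_apply, Pi.one_apply, integral_Icc_zero_one_pow]

theorem stirlingFirst_add_eq_choose_mul_factorial_mul_coeff (m k : ℕ) :
    (stirlingFirst (m + k) k : ℝ) =
      (m + k).choose k * (m ! * coeff m (negLogOneSubDivX ^ k)) := by
  refine mul_left_cancel₀ (by positivity : (k ! : ℝ) ≠ 0) ?_
  have hcoeff := factorial_mul_coeff_X_mul_negLogOneSubDivX_pow (m + k) k
  rw [mul_pow, coeff_X_pow_mul, ← add_choose_mul_factorial_mul_factorial] at hcoeff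
  push_cast at hcoeff
  linear_combination -hcoeff

/-- Probabilistic representation of the signed Stirling numbers of the first kind:
if `Y = U·T` with `U` uniform on `[0,1]` and `T` exponential(1) independent, and `S_k` is the
sum of `k` independent copies of `Y`, then `s(n,k) = (-1)^{n-k} C(n,k) E[S_k^{n-k}]`, the
expectation being written as an integral over `[0,1]^k × (0,∞)^k` against the
exponential density `∏ e^{-t_i}`. -/
theorem stirling1_probabilistic (n k : ℕ) (h : k ≤ n) :
    (stirling1 n k : ℝ) = (-1 : ℝ) ^ (n - k) * (n.choose k : ℝ) *
      ∫ u in Set.Icc (0 : Fin k → ℝ) 1,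
        ∫ t in Set.univ.pi (fun _ : Fin k => Set.Ioi (0 : ℝ)),
          (∑ i, u i * t i) ^ (n - k) * ∏ i, Real.exp (-(t i)) := by
  obtain ⟨m, rfl⟩ := Nat.exists_eq_add_of_le' h
  have hsign : (-1 : ℝ) ^ (m + k + k) = (-1) ^ m := by
    rw [add_assoc, ← two_mul, pow_add, pow_mul, neg_one_sq, one_pow, mul_one]
  rw [Nat.add_sub_cancel, integral_integral_sum_mul_pow_mul_prod_exp_neg, mul_assoc,
    ← stirlingFirst_add_eq_choose_mul_factorial_mul_coeff,
    stirling1_eq_neg_one_pow_mul_stirlingFirst]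
  push_cast
  rw [hsign]
end
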